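/- Let f = sec(2x), g = 2 tan(2x), and let (fD) denote the operator φ ↦ f·φ'. For all n ≥ 1, (fD)^n(f) = n! Σ_{k=0}^{⌊n/2⌋} H(n,k) f^{n+1+2k} g^{n−2k}, where H(n,k) = C(2k,k) C(n,2k). -/

import Mathlib

/-!
Only the relations `f' = f g` and `g' = 4 f²` (valid where `cos 2x ≠ 0`) matter. They give
`fD (f^a g^b) = a f^(a+1) g^(b+1) + 4 b f^(a+3) g^(b-1)`, so by induction `(fD)^n f = n! P_n(f, g)`
with `P_n(F, G) = Σ H(n,k) F^(n+1+2k) G^(n-2k)`, provided the coefficients satisfy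
`(n+1) H(n+1,k+1) = (n+3+2k) H(n,k+1) + 4(n-2k) H(n,k)`. This recurrence follows from Pascal's rule
together with `(k+1) C(2k+2,k+1) = 2(2k+1) C(2k,k)` and `(j+1) C(n,j+1) = (n-j) C(n,j)`.
-/

open Finset

/-- The operator `fD : φ ↦ f·φ'` where `f = sec(2x)`. -/
noncomputable def fDop (φ : ℝ → ℝ) : ℝ → ℝ :=
  fun x => (Real.cos (2 * x))⁻¹ * deriv φ x

-- `H(n,k)`
def gammaB (n k : ℕ) : ℕ := (2 * k).choose k * n.choose (2 * k)

lemma gammaB_eq_zero {n k : ℕ} (h : n < 2 * k) : gammaB n k = 0 := by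
  simp [gammaB, Nat.choose_eq_zero_of_lt h]

lemma succ_mul_gammaB_succ_succ (n k : ℕ) :
    (n + 1) * gammaB (n + 1) (k + 1) =
      (n + 3 + 2 * k) * gammaB n (k + 1) + 4 * (n - 2 * k) * gammaB n k := by
  rcases Nat.lt_or_ge n (2 * k + 1) with hn | hn
  · simp [gammaB_eq_zero (n := n + 1) (k := k + 1) (by omega),
      gammaB_eq_zero (n := n) (k := k + 1) (by omega),
      Nat.sub_eq_zero_of_le (by omega : n ≤ 2 * k)]
  obtain ⟨m, rfl⟩ := Nat.exists_eq_add_of_le hn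
  have hc := Nat.succ_mul_centralBinom_succ k
  have hb := Nat.choose_succ_right_eq (2 * k + 1 + m) (2 * k)
  have hd := Nat.choose_succ_right_eq (2 * k + 1 + m) (2 * k + 1)
  rw [Nat.centralBinom_eq_two_mul_choose, Nat.centralBinom_eq_two_mul_choose] at hc
  rw [(by omega : 2 * k + 1 + m - 2 * k = m + 1)] at hb ⊢
  rw [(by omega : 2 * k + 1 + m - (2 * k + 1) = m)] at hd
  unfold gammaB
  rw [(by omega : 2 * (k + 1) = 2 * k + 1 + 1)] at hc ⊢
  rw [Nat.choose_succ_succ' (2 * k + 1 + m) (2 * k + 1)]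
  linear_combination 2 * (2 * k + 1 + m).choose (2 * k + 1) * hc
    - (2 * k + 1 + 1).choose (k + 1) * hd + 4 * (2 * k).choose k * hb

noncomputable def gammaPoly (n : ℕ) (F G : ℝ) : ℝ :=
  ∑ k ∈ range (n / 2 + 1), (gammaB n k : ℝ) * (F ^ (n + 1 + 2 * k) * G ^ (n - 2 * k))

lemma sum_range_gammaB_mul_eq {n N : ℕ} (hN : n / 2 + 1 ≤ N) (u : ℕ → ℝ) :
    ∑ k ∈ range N, (gammaB n k : ℝ) * u k =
      ∑ k ∈ range (n / 2 + 1), (gammaB n k : ℝ) * u k :=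
  eventually_constant_sum (fun k hk => by simp [gammaB_eq_zero (by omega : n < 2 * k)]) hN

lemma succ_mul_gammaB_succ_succ_monomial (n k : ℕ) (F G : ℝ) :
    (n + 1 : ℝ) *
        (gammaB (n + 1) (k + 1) * (F ^ (n + 1 + 1 + 2 * (k + 1)) * G ^ (n + 1 - 2 * (k + 1)))) =
      gammaB n (k + 1) *
          ((n + 1 + 2 * (k + 1) : ℕ) * F ^ (n + 2 + 2 * (k + 1)) * G ^ (n - 2 * (k + 1) + 1)) +
        gammaB n k * (4 * (n - 2 * k : ℕ) * F ^ (n + 4 + 2 * k) * G ^ (n - 2 * k - 1)) := by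
  have hrec := congrArg (fun c : ℕ => (c : ℝ) * (F ^ (n + 4 + 2 * k) * G ^ (n - 2 * k - 1)))
    (succ_mul_gammaB_succ_succ n k)
  -- the exponent `n - 2 * (k + 1) + 1` is truncated exactly when the coefficient vanishes
  have hA : (gammaB n (k + 1) : ℝ) *
        ((n + 1 + 2 * (k + 1) : ℕ) * F ^ (n + 2 + 2 * (k + 1)) * G ^ (n - 2 * (k + 1) + 1)) =
      gammaB n (k + 1) * ((n + 3 + 2 * k : ℕ) * (F ^ (n + 4 + 2 * k) * G ^ (n - 2 * k - 1))) := by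
    by_cases hk : 2 * k + 2 ≤ n
    · rw [(by omega : n - 2 * (k + 1) + 1 = n - 2 * k - 1),
        (by omega : n + 2 + 2 * (k + 1) = n + 4 + 2 * k),
        (by omega : n + 1 + 2 * (k + 1) = n + 3 + 2 * k)]
      ring
    · simp [gammaB_eq_zero (by omega : n < 2 * (k + 1))]
  rw [hA, (by omega : n + 1 + 1 + 2 * (k + 1) = n + 4 + 2 * k),
    (by omega : n + 1 - 2 * (k + 1) = n - 2 * k - 1)]
  push_cast at hrec ⊢
  linear_combination hrec

lemma gammaPoly_succ (n : ℕ) (F G : ℝ) :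
    (n + 1) * gammaPoly (n + 1) F G =
      F * ∑ k ∈ range (n / 2 + 1), (gammaB n k : ℝ) *
        ((n + 1 + 2 * k : ℕ) * F ^ (n + 1 + 2 * k) * G ^ (n - 2 * k + 1) +
          4 * (n - 2 * k : ℕ) * F ^ (n + 1 + 2 * k + 2) * G ^ (n - 2 * k - 1)) := by
  have hR : F * ∑ k ∈ range (n / 2 + 1), (gammaB n k : ℝ) *
        ((n + 1 + 2 * k : ℕ) * F ^ (n + 1 + 2 * k) * G ^ (n - 2 * k + 1) +
          4 * (n - 2 * k : ℕ) * F ^ (n + 1 + 2 * k + 2) * G ^ (n - 2 * k - 1)) =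
      ∑ k ∈ range (n + 2),
        ((gammaB n k : ℝ) * ((n + 1 + 2 * k : ℕ) * F ^ (n + 2 + 2 * k) * G ^ (n - 2 * k + 1)) +
          gammaB n k * (4 * (n - 2 * k : ℕ) * F ^ (n + 4 + 2 * k) * G ^ (n - 2 * k - 1))) := by
    rw [← sum_range_gammaB_mul_eq (N := n + 2) (by omega), mul_sum]
    exact sum_congr rfl fun k _ => by ring
  rw [hR, sum_add_distrib, sum_range_succ', sum_range_succ (fun k => (gammaB n k : ℝ) * _),
    gammaB_eq_zero (by omega : n < 2 * (n + 1)), gammaPoly,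
    ← sum_range_gammaB_mul_eq (N := n + 2) (by omega), mul_sum, sum_range_succ']
  simp only [succ_mul_gammaB_succ_succ_monomial, sum_add_distrib]
  simp only [gammaB, Nat.cast_mul, Nat.cast_add, Nat.cast_one, Nat.cast_zero, Nat.choose_self,
    Nat.choose_zero_right, mul_zero, mul_one, add_zero, tsub_zero, zero_mul]
  ring

section DerivativeRelations

variable {f g : ℝ → ℝ}

lemma hasDerivAt_pow_mul_pow {x : ℝ} (hf : HasDerivAt f (f x * g x) x)
    (hg : HasDerivAt g (4 * f x ^ 2) x) (a b : ℕ) :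
    HasDerivAt (fun y => f y ^ a * g y ^ b)
      (a * f x ^ a * g x ^ (b + 1) + 4 * b * f x ^ (a + 2) * g x ^ (b - 1)) x := by
  refine ((hf.fun_pow a).fun_mul (hg.fun_pow b)).congr_deriv ?_
  rcases a with _ | a <;> rcases b with _ | b <;>
    simp only [Nat.cast_add, Nat.cast_one, Nat.cast_zero, add_tsub_cancel_right, zero_tsub,
      pow_zero, pow_one, mul_one, one_mul, zero_mul, mul_zero, add_zero, zero_add] <;>
    ring

lemma hasDerivAt_gammaPoly {x : ℝ} (hf : HasDerivAt f (f x * g x) x)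
    (hg : HasDerivAt g (4 * f x ^ 2) x) (n : ℕ) :
    HasDerivAt (fun y => gammaPoly n (f y) (g y))
      (∑ k ∈ range (n / 2 + 1), (gammaB n k : ℝ) *
        ((n + 1 + 2 * k : ℕ) * f x ^ (n + 1 + 2 * k) * g x ^ (n - 2 * k + 1) +
          4 * (n - 2 * k : ℕ) * f x ^ (n + 1 + 2 * k + 2) * g x ^ (n - 2 * k - 1))) x :=
  HasDerivAt.fun_sum fun _ _ => (hasDerivAt_pow_mul_pow hf hg _ _).const_mul _

theorem iterate_mul_deriv_eq_gammaPoly {U : Set ℝ} (hU : IsOpen U)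
    (hf : ∀ y ∈ U, HasDerivAt f (f y * g y) y) (hg : ∀ y ∈ U, HasDerivAt g (4 * f y ^ 2) y)
    (n : ℕ) {x : ℝ} (hx : x ∈ U) :
    (fun φ y => f y * deriv φ y)^[n] f x = n.factorial * gammaPoly n (f x) (g x) := by
  induction n generalizing x with
  | zero => simp [gammaPoly, gammaB]
  | succ n ih =>
    have hloc : (fun φ y => f y * deriv φ y)^[n] f =ᶠ[nhds x]
        fun y => n.factorial * gammaPoly n (f y) (g y) :=
      Filter.eventually_of_mem (hU.mem_nhds hx) fun y hy => ih hy
    rw [Function.iterate_succ_apply', hloc.deriv_eq,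
      ((hasDerivAt_gammaPoly (hf x hx) (hg x hx) n).const_mul _).deriv, mul_left_comm,
      ← gammaPoly_succ, Nat.factorial_succ]
    push_cast
    ring

end DerivativeRelations

lemma hasDerivAt_inv_cos_two_mul {x : ℝ} (hx : Real.cos (2 * x) ≠ 0) :
    HasDerivAt (fun y => (Real.cos (2 * y))⁻¹)
      ((Real.cos (2 * x))⁻¹ * (2 * Real.tan (2 * x))) x := by
  refine (((Real.hasDerivAt_cos _).comp x ((hasDerivAt_id x).const_mul 2)).inv hx).congr_deriv ?_
  simp only [Function.comp_apply, id, Real.tan_eq_sin_div_cos]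
  field_simp

lemma hasDerivAt_two_mul_tan_two_mul {x : ℝ} (hx : Real.cos (2 * x) ≠ 0) :
    HasDerivAt (fun y => 2 * Real.tan (2 * y)) (4 * ((Real.cos (2 * x))⁻¹) ^ 2) x := by
  have h := ((Real.hasDerivAt_tan hx).comp x ((hasDerivAt_id x).const_mul 2)).const_mul 2
  refine h.congr_deriv ?_
  field_simp
  ring

theorem fD_iterate_sec_general (n : ℕ) (x : ℝ) (hx : Real.cos (2 * x) ≠ 0) :
    fDop^[n] (fun x : ℝ => (Real.cos (2 * x))⁻¹) x =
      (n.factorial : ℝ) * ∑ k ∈ Finset.range (n / 2 + 1),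
        ((2 * k).choose k : ℝ) * (n.choose (2 * k)) *
          ((Real.cos (2 * x))⁻¹) ^ (n + 1 + 2 * k) *
          (2 * Real.tan (2 * x)) ^ (n - 2 * k) := by
  have hU : IsOpen {y : ℝ | Real.cos (2 * y) ≠ 0} :=
    isOpen_ne_fun (by fun_prop) continuous_const
  refine (iterate_mul_deriv_eq_gammaPoly hU (fun y hy => hasDerivAt_inv_cos_two_mul hy)
    (fun y hy => hasDerivAt_two_mul_tan_two_mul hy) n hx).trans ?_
  simp only [gammaPoly, gammaB, Nat.cast_mul, mul_assoc]

/-- For all `n ≥ 1` and `x` with `cos(2x) ≠ 0`,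
`(fD)^n(f) = n! Σ_{k=0}^{⌊n/2⌋} H(n,k) f^{n+1+2k} g^{n−2k}`,
where `f = sec(2x)`, `g = 2 tan(2x)` and `H(n,k) = C(2k,k) C(n,2k)`. -/
theorem fD_iterate_sec (n : ℕ) (hn : 1 ≤ n) (x : ℝ) (hx : Real.cos (2 * x) ≠ 0) :
    fDop^[n] (fun x : ℝ => (Real.cos (2 * x))⁻¹) x =
      (n.factorial : ℝ) * ∑ k ∈ Finset.range (n / 2 + 1),
        ((2 * k).choose k : ℝ) * (n.choose (2 * k)) *
          ((Real.cos (2 * x))⁻¹) ^ (n + 1 + 2 * k) *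
          (2 * Real.tan (2 * x)) ^ (n - 2 * k) :=
  fD_iterate_sec_general n x hx
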